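/- arXiv:math/0510043 — 3 statements merged into one kernel-verified Lean document; each statement's English description precedes it below -/
import Mathlib

section
/- Let G be a moderate function with G(2t) ≤ c·G(t) for all t ≥ 0, let X and (X_n)_{n≥1} be i.i.d. integrable real random variables, let α ∈ (0,1), and let t ≥ 1 satisfy E[|X|·1_{|X| ≥ t}] ≤ 1 − α. Then E[|X|·G(|X|)] ≤ 4c²·( t·G(t) + α^{-1}·E[G(L_{1/2})] ), where L_{1/2} is the last time n with |S_n/n| ≥ 1/2. -/
open MeasureTheory ProbabilityTheory ENNReal

/-- Partial sums `S_n = X_1 + ⋯ + X_n` (here `X i` for `i < n`). -/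
noncomputable def partialSum {Ω : Type*} (X : ℕ → Ω → ℝ) (n : ℕ) (ω : Ω) : ℝ :=
  ∑ i ∈ Finset.range n, X i ω

/-- The last deviation time `L_a = sup({0} ∪ {n ≥ 1 : |S_n/n| ≥ a}) ∈ ℕ ∪ {∞}`. -/
noncomputable def lastDev {Ω : Type*} (X : ℕ → Ω → ℝ) (a : ℝ) (ω : Ω) : ℕ∞ :=
  ⨆ n ∈ {n : ℕ | 1 ≤ n ∧ a ≤ |partialSum X n ω / n|}, (n : ℕ∞)

/-- Evaluation of `G` at an extended natural number, with `G(∞) = ∞`. -/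
noncomputable def evalG (G : ℝ → ℝ) : ℕ∞ → ℝ≥0∞
  | ⊤ => ⊤
  | (n : ℕ) => ENNReal.ofReal (G n)

/-- A positive function on `[0,∞)` is moderate if it is non-decreasing, tends to `+∞`,
and `G(2t) ≤ c·G(t)`. -/
def Moderate (G : ℝ → ℝ) : Prop :=
  (∀ t ≥ 0, 0 < G t) ∧ MonotoneOn G (Set.Ici 0) ∧
    Filter.Tendsto G Filter.atTop Filter.atTop ∧
    ∃ c : ℝ, ∀ t ≥ 0, G (2 * t) ≤ c * G t

/-!
Write `N = ⌊t⌋` and `q j = P(|X| ≥ j + 1)`. If `|X_j| ≥ j + 1` with `j ≥ 1`, then `|S_n / n| ≥ 1/2`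
for `n = j` or `n = j + 1`, so `L_{1/2} ≥ m` on the union of the independent events
`{|X_j| ≥ j + 1}`, `j ≥ m`. For `m ≥ N` these events have total probability
`∑_{j ≥ m} q j ≤ E[|X|; |X| ≥ t] ≤ 1 - α`, and the Bonferroni bound `1 - ∏ (1 - p_j) ≥ α ∑ p_j`
gives `P(L_{1/2} ≥ m) ≥ α ∑_{j ≥ m} q j`. Abel summation turns this into
`α ∑_{j ≥ N} q j G(j) ≤ E[G(L_{1/2})]`. On the other hand, the doubling condition gives
`x G(x) ≤ 4c² (t G(t) + ∑_{N ≤ j < ⌊x⌋} G(j))`, whose expectation at `x = |X|` is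
`4c² (t G(t) + ∑_{j ≥ N} q j G(j))`.
-/

open Finset

theorem prod_one_sub_le_one_sub_add_sq_div_two {ι : Type*} (s : Finset ι) {p : ι → ℝ}
    (h0 : ∀ i ∈ s, 0 ≤ p i) (h1 : ∀ i ∈ s, p i ≤ 1) :
    ∏ i ∈ s, (1 - p i) ≤ 1 - ∑ i ∈ s, p i + (∑ i ∈ s, p i) ^ 2 / 2 := by
  classical
  induction s using Finset.cons_induction with
  | empty => simp
  | cons a s _ ih =>
    rw [prod_cons, sum_cons]
    have hS : 0 ≤ ∑ i ∈ s, p i := sum_nonneg fun i hi => h0 i (mem_cons_of_mem hi)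
    have hpa := h0 a (mem_cons_self a s)
    have hpa' := h1 a (mem_cons_self a s)
    have ih := ih (fun i hi => h0 i (mem_cons_of_mem hi)) (fun i hi => h1 i (mem_cons_of_mem hi))
    nlinarith

theorem mul_sum_le_one_sub_prod_one_sub {ι : Type*} (s : Finset ι) {p : ι → ℝ} {α : ℝ}
    (h0 : ∀ i ∈ s, 0 ≤ p i) (h1 : ∀ i ∈ s, p i ≤ 1) (hs : ∑ i ∈ s, p i ≤ 1 - α) :
    α * ∑ i ∈ s, p i ≤ 1 - ∏ i ∈ s, (1 - p i) := by
  have := prod_one_sub_le_one_sub_add_sq_div_two s h0 h1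
  have : 0 ≤ ∑ i ∈ s, p i := sum_nonneg h0
  nlinarith

theorem ProbabilityTheory.iIndepSet.mul_sum_measureReal_le {Ω ι : Type*} [MeasurableSpace Ω]
    {μ : Measure Ω} {E : ι → Set Ω} (h : iIndepSet E μ) (hE : ∀ i, MeasurableSet (E i))
    (s : Finset ι) {α : ℝ} (hs : ∑ i ∈ s, μ.real (E i) ≤ 1 - α) :
    α * ∑ i ∈ s, μ.real (E i) ≤ μ.real (⋃ i ∈ s, E i) := by
  have := h.isProbabilityMeasure
  have hcompl : μ.real (⋂ i ∈ s, (E i)ᶜ) = ∏ i ∈ s, (1 - μ.real (E i)) := by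
    rw [measureReal_def, (iIndepSet_iff _ _).1 h s
      (fun i _ => (MeasurableSpace.measurableSet_generateFrom (Set.mem_singleton _)).compl),
      toReal_prod]
    exact prod_congr rfl fun i _ => probReal_compl_eq_one_sub (hE i)
  have hunion : (⋃ i ∈ s, E i) = (⋂ i ∈ s, (E i)ᶜ)ᶜ := by simp
  rw [hunion, probReal_compl_eq_one_sub (s.measurableSet_biInter fun i _ => (hE i).compl),
    hcompl]
  exact mul_sum_le_one_sub_prod_one_sub s (fun i _ => measureReal_nonneg)
    (fun i _ => measureReal_le_one) hs

theorem le_lastDev {Ω : Type*} {Xs : ℕ → Ω → ℝ} {a : ℝ} {ω : Ω} {n : ℕ} (hn : 1 ≤ n)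
    (h : a ≤ |partialSum Xs n ω / n|) : (n : ℕ∞) ≤ lastDev Xs a ω :=
  le_iSup₂ (f := fun (n : ℕ) (_ : n ∈ {n : ℕ | 1 ≤ n ∧ a ≤ |partialSum Xs n ω / n|}) =>
    (n : ℕ∞)) n ⟨hn, h⟩

/-- If neither `|S_i| ≥ i/2` nor `|S_{i+1}| ≥ (i+1)/2`, then `|X_i| = |S_{i+1} - S_i| < i + 1`. -/
theorem le_lastDev_of_add_one_le_abs {Ω : Type*} {Xs : ℕ → Ω → ℝ} {ω : Ω} {i : ℕ} (hi : 1 ≤ i)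
    (h : (i : ℝ) + 1 ≤ |Xs i ω|) : (i : ℕ∞) ≤ lastDev Xs (1 / 2) ω := by
  by_contra hlt
  rw [not_le] at hlt
  have hsmall : ∀ n, i ≤ n → |partialSum Xs n ω| < n / 2 := fun n hn => by
    have hn0 : (0 : ℝ) < n := by exact_mod_cast hi.trans hn
    have : ¬ 1 / 2 ≤ |partialSum Xs n ω / n| := fun h' =>
      (le_lastDev (hi.trans hn) h').not_gt (hlt.trans_le (by exact_mod_cast hn))
    rw [not_le, abs_div, Nat.abs_cast, div_lt_iff₀ hn0] at this
    linarith
  have hSi := hsmall i le_rfl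
  have hSi1 := hsmall (i + 1) (Nat.le_succ i)
  have hXi : Xs i ω = partialSum Xs (i + 1) ω - partialSum Xs i ω := by
    simp [partialSum, sum_range_succ]
  have := abs_sub (partialSum Xs (i + 1) ω) (partialSum Xs i ω)
  push_cast at hSi1
  rw [← hXi] at this
  linarith

def increment (g : ℕ → ℝ≥0∞) : ℕ → ℝ≥0∞
  | 0 => g 0
  | n + 1 => g (n + 1) - g n

theorem sum_range_succ_increment {g : ℕ → ℝ≥0∞} (hg : Monotone g) (j : ℕ) :
    ∑ n ∈ range (j + 1), increment g n = g j := by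
  induction j with
  | zero => simp [increment]
  | succ j ih => rw [sum_range_succ, ih, increment, add_tsub_cancel_of_le (hg j.le_succ)]

theorem tsum_ite_le_increment_eq {g : ℕ → ℝ≥0∞} (hg : Monotone g) (j : ℕ) :
    ∑' n, (if n ≤ j then increment g n else 0) = g j := by
  rw [tsum_eq_sum (s := range (j + 1)) fun n hn => if_neg (by simpa [Nat.lt_succ_iff] using hn),
    ← sum_range_succ_increment hg j]
  exact sum_congr rfl fun n hn => if_pos (Nat.lt_succ_iff.1 (mem_range.1 hn))

theorem tsum_mul_eq_tsum_increment_mul {g : ℕ → ℝ≥0∞} (hg : Monotone g) (a : ℕ → ℝ≥0∞) :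
    ∑' j, a j * g j = ∑' n, increment g n * ∑' j, if n ≤ j then a j else 0 := by
  calc ∑' j, a j * g j = ∑' j, ∑' n, if n ≤ j then increment g n * a j else 0 := by
        refine tsum_congr fun j => ?_
        rw [← tsum_ite_le_increment_eq hg j, ← ENNReal.tsum_mul_left]
        exact tsum_congr fun n => by split_ifs <;> simp [mul_comm]
    _ = ∑' n, increment g n * ∑' j, if n ≤ j then a j else 0 := by
        rw [ENNReal.tsum_comm]
        refine tsum_congr fun n => ?_
        rw [← ENNReal.tsum_mul_left]
        exact tsum_congr fun j => by split_ifs <;> simp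

theorem tsum_ite_increment_le_evalG {G : ℝ → ℝ} (hG : Monotone fun n : ℕ => ENNReal.ofReal (G n))
    (L : ℕ∞) :
    ∑' n : ℕ, (if (n : ℕ∞) ≤ L then increment (fun n => ENNReal.ofReal (G n)) n else 0) ≤
      evalG G L := by
  induction L using ENat.recTopCoe with
  | top => exact le_top
  | coe j =>
    simp only [Nat.cast_le]
    exact (tsum_ite_le_increment_eq hG j).le

section Doubling

variable {G : ℝ → ℝ} {c : ℝ}

theorem one_le_of_doubling (hpos : ∀ s ≥ 0, 0 < G s) (hc : ∀ s ≥ 0, G (2 * s) ≤ c * G s) :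
    1 ≤ c := by
  have h := hc 0 le_rfl
  rw [mul_zero] at h
  exact (le_mul_iff_one_le_left (hpos 0 le_rfl)).1 h

theorem le_sq_mul_div_four (hpos : ∀ s ≥ 0, 0 < G s) (hc : ∀ s ≥ 0, G (2 * s) ≤ c * G s)
    {x : ℝ} (hx : 0 ≤ x) : G x ≤ c ^ 2 * G (x / 4) := by
  have h2 := hc (x / 2) (by positivity)
  have h4 := hc (x / 4) (by positivity)
  rw [show 2 * (x / 2) = x by ring] at h2
  rw [show 2 * (x / 4) = x / 2 by ring] at h4
  have := one_le_of_doubling hpos hc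
  nlinarith

theorem mul_le_of_lt_four_mul (hpos : ∀ s ≥ 0, 0 < G s) (hmono : MonotoneOn G (Set.Ici 0))
    (hc : ∀ s ≥ 0, G (2 * s) ≤ c * G s) {t x : ℝ} (hx0 : 0 ≤ x) (hx : x < 4 * t) :
    x * G x ≤ 4 * c ^ 2 * (t * G t) := by
  have ht : 0 ≤ t := by linarith
  have hGx : G x ≤ G (4 * t) := hmono hx0 (by simp; positivity) hx.le
  have hG4t := le_sq_mul_div_four hpos hc (x := 4 * t) (by positivity)
  rw [show 4 * t / 4 = t by ring] at hG4t
  have := hpos x hx0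
  nlinarith

theorem mul_le_sum_Ico (hpos : ∀ s ≥ 0, 0 < G s) (hmono : MonotoneOn G (Set.Ici 0))
    (hc : ∀ s ≥ 0, G (2 * s) ≤ c * G s) {t x : ℝ} (h4 : 4 ≤ x) (ht : 2 * t ≤ x) :
    x * G x ≤ 4 * c ^ 2 * ∑ j ∈ Ico ⌊t⌋₊ ⌊x⌋₊, G j := by
  have hx0 : 0 ≤ x := by linarith
  have hGx4 := hpos (x / 4) (by positivity)
  have hm : ⌊x / 2⌋₊ ≤ ⌊x⌋₊ := Nat.floor_le_floor (by linarith)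
  have hcard : x / 4 ≤ #(Ico ⌊x / 2⌋₊ ⌊x⌋₊) := by
    rw [Nat.card_Ico, Nat.cast_sub hm]
    have := Nat.lt_floor_add_one x
    have := Nat.floor_le (by positivity : 0 ≤ x / 2)
    linarith
  have hterm : ∀ j ∈ Ico ⌊x / 2⌋₊ ⌊x⌋₊, G (x / 4) ≤ G j := fun j hj => by
    have := Nat.lt_floor_add_one (x / 2)
    have : (⌊x / 2⌋₊ : ℝ) ≤ j := by exact_mod_cast (mem_Ico.1 hj).1
    exact hmono (by simp; positivity) (by simp) (by linarith)
  have hsub : Ico ⌊x / 2⌋₊ ⌊x⌋₊ ⊆ Ico ⌊t⌋₊ ⌊x⌋₊ :=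
    Ico_subset_Ico_left (Nat.floor_le_floor (by linarith))
  calc x * G x ≤ x * (c ^ 2 * G (x / 4)) :=
        mul_le_mul_of_nonneg_left (le_sq_mul_div_four hpos hc hx0) hx0
    _ = 4 * c ^ 2 * (x / 4 * G (x / 4)) := by ring
    _ ≤ 4 * c ^ 2 * (#(Ico ⌊x / 2⌋₊ ⌊x⌋₊) * G (x / 4)) := by gcongr
    _ ≤ 4 * c ^ 2 * ∑ j ∈ Ico ⌊x / 2⌋₊ ⌊x⌋₊, G j := by
        gcongr
        rw [← nsmul_eq_mul]
        exact card_nsmul_le_sum _ _ _ hterm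
    _ ≤ 4 * c ^ 2 * ∑ j ∈ Ico ⌊t⌋₊ ⌊x⌋₊, G j := by
        gcongr 4 * c ^ 2 * ?_
        exact sum_le_sum_of_subset_of_nonneg hsub fun j _ _ => (hpos j j.cast_nonneg).le

theorem mul_le_head_add_sum_Ico (hpos : ∀ s ≥ 0, 0 < G s) (hmono : MonotoneOn G (Set.Ici 0))
    (hc : ∀ s ≥ 0, G (2 * s) ≤ c * G s) {t x : ℝ} (ht : 1 ≤ t) (hx : 0 ≤ x) :
    x * G x ≤ 4 * c ^ 2 * (t * G t + ∑ j ∈ Ico ⌊t⌋₊ ⌊x⌋₊, G j) := by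
  have hsum : 0 ≤ ∑ j ∈ Ico ⌊t⌋₊ ⌊x⌋₊, G j := sum_nonneg fun j _ => (hpos j j.cast_nonneg).le
  have hhead : 0 ≤ t * G t := mul_nonneg (by linarith) (hpos t (by linarith)).le
  rcases lt_or_ge x (4 * t) with hxt | hxt
  · nlinarith [mul_le_of_lt_four_mul hpos hmono hc hx hxt, sq_nonneg c]
  · nlinarith [mul_le_sum_Ico hpos hmono hc (by linarith) (by linarith : 2 * t ≤ x), sq_nonneg c]

end Doubling

theorem Nat.cast_add_one_le_iff_lt_floor {x : ℝ} (hx : 0 ≤ x) (j : ℕ) :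
    (j : ℝ) + 1 ≤ x ↔ j < ⌊x⌋₊ := by
  rw [Nat.lt_iff_add_one_le, Nat.le_floor_iff hx]
  push_cast
  rfl

theorem ofReal_mul_le_head_add_tsum {G : ℝ → ℝ} {c t x : ℝ} (hpos : ∀ s ≥ 0, 0 < G s)
    (hmono : MonotoneOn G (Set.Ici 0)) (hc : ∀ s ≥ 0, G (2 * s) ≤ c * G s) (ht : 1 ≤ t)
    (hx : 0 ≤ x) :
    ENNReal.ofReal (x * G x) ≤ ENNReal.ofReal (4 * c ^ 2) * (ENNReal.ofReal (t * G t) +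
      ∑' j : ℕ, if ⌊t⌋₊ ≤ j ∧ (j : ℝ) + 1 ≤ x then ENNReal.ofReal (G j) else 0) := by
  have hG : ∀ j : ℕ, 0 ≤ G j := fun j => (hpos j j.cast_nonneg).le
  have hsum : (∑' j : ℕ, if ⌊t⌋₊ ≤ j ∧ (j : ℝ) + 1 ≤ x then ENNReal.ofReal (G j) else 0) =
      ∑ j ∈ Ico ⌊t⌋₊ ⌊x⌋₊, ENNReal.ofReal (G j) := by
    rw [sum_eq_tsum_indicator]
    refine tsum_congr fun j => ?_
    simp only [Set.indicator_apply, coe_Ico, Set.mem_Ico, Nat.cast_add_one_le_iff_lt_floor hx]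
  rw [hsum, ← ENNReal.ofReal_sum_of_nonneg fun j _ => hG j,
    ← ENNReal.ofReal_add (mul_nonneg (by linarith) (hpos t (by linarith)).le)
      (sum_nonneg fun j _ => hG j), ← ENNReal.ofReal_mul (by positivity)]
  exact ENNReal.ofReal_le_ofReal (mul_le_head_add_sum_Ico hpos hmono hc ht hx)

theorem sum_ite_add_one_le {s : Finset ℕ} {t x : ℝ} (hs : ∀ j ∈ s, ⌊t⌋₊ ≤ j) (hx : 0 ≤ x) :
    ∑ j ∈ s, (if (j : ℝ) + 1 ≤ x then (1 : ℝ) else 0) ≤ if t ≤ x then x else 0 := by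
  rw [sum_ite, sum_const_zero, add_zero, sum_const, nsmul_one]
  have hsub : s.filter (fun j : ℕ => (j : ℝ) + 1 ≤ x) ⊆ Ico ⌊t⌋₊ ⌊x⌋₊ := fun j hj => by
    rw [mem_filter, Nat.cast_add_one_le_iff_lt_floor hx] at hj
    exact mem_Ico.2 ⟨hs j hj.1, hj.2⟩
  have hcard := card_le_card hsub
  rw [Nat.card_Ico] at hcard
  split_ifs with htx
  · calc (#(s.filter fun j : ℕ => (j : ℝ) + 1 ≤ x) : ℝ) ≤ ⌊x⌋₊ := by
          exact_mod_cast hcard.trans (Nat.sub_le _ _)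
      _ ≤ x := Nat.floor_le hx
  · have : ⌊x⌋₊ ≤ ⌊t⌋₊ := Nat.floor_le_floor (not_le.1 htx).le
    have : #(s.filter fun j : ℕ => (j : ℝ) + 1 ≤ x) = 0 := by omega
    simp [this]

section Probability

variable {Ω : Type*} [MeasurableSpace Ω] {μ : Measure Ω} {X : Ω → ℝ} {Xs : ℕ → Ω → ℝ} {t α : ℝ}

theorem sum_measureReal_le_setIntegral [IsFiniteMeasure μ] (hX : Measurable X)
    (hint : Integrable X μ) {s : Finset ℕ} (hs : ∀ j ∈ s, ⌊t⌋₊ ≤ j) :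
    ∑ j ∈ s, μ.real {ω | (j : ℝ) + 1 ≤ |X ω|} ≤ ∫ ω in {ω | t ≤ |X ω|}, |X ω| ∂μ := by
  have hmeas : ∀ r : ℝ, MeasurableSet {ω | r ≤ |X ω|} :=
    fun r => measurableSet_le measurable_const hX.abs
  have hind : ∀ j : ℕ, Integrable ({ω | (j : ℝ) + 1 ≤ |X ω|}.indicator (1 : Ω → ℝ)) μ :=
    fun j => (integrable_const 1).indicator (hmeas _)
  rw [← integral_indicator (hmeas t)]
  simp_rw [← integral_indicator_one (hmeas _)]
  rw [← integral_finsetSum _ fun j _ => hind j]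
  refine integral_mono (integrable_finsetSum _ fun j _ => hind j) (hint.abs.indicator (hmeas t))
    fun ω => ?_
  simpa [Set.indicator_apply] using sum_ite_add_one_le hs (abs_nonneg (X ω))

theorem iIndepSet_add_one_le_abs (hXs : ∀ n, Measurable (Xs n)) (hindep : iIndepFun Xs μ) :
    iIndepSet (fun j : ℕ => {ω | (j : ℝ) + 1 ≤ |Xs j ω|}) μ :=
  (iIndepSet_iff_meas_biInter fun j => measurableSet_le measurable_const (hXs j).abs).2
    fun _ => hindep.meas_biInter fun _ _ =>
      ⟨_, measurableSet_le measurable_const measurable_abs, rfl⟩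

theorem lintegral_tsum_ite_add_one_le_abs (hX : Measurable X) (N : ℕ) (f : ℕ → ℝ≥0∞) :
    ∫⁻ ω, ∑' j : ℕ, (if N ≤ j ∧ (j : ℝ) + 1 ≤ |X ω| then f j else 0) ∂μ =
      ∑' j, (if N ≤ j then μ {ω | (j : ℝ) + 1 ≤ |X ω|} else 0) * f j := by
  have hmeas : ∀ j : ℕ, MeasurableSet {ω | (j : ℝ) + 1 ≤ |X ω|} :=
    fun j => measurableSet_le measurable_const hX.abs
  have hterm : ∀ j : ℕ, Measurable fun ω => if N ≤ j ∧ (j : ℝ) + 1 ≤ |X ω| then f j else 0 :=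
    fun j => Measurable.ite ((MeasurableSet.const _).inter (hmeas j)) measurable_const
      measurable_const
  rw [lintegral_tsum fun j => (hterm j).aemeasurable]
  refine tsum_congr fun j => ?_
  by_cases hj : N ≤ j
  · simp only [hj, true_and, if_true]
    rw [mul_comm, ← lintegral_indicator_const (hmeas j)]
    rfl
  · simp [hj]

theorem ofReal_mul_tsum_le_measure_iUnion [IsProbabilityMeasure μ] (hX : Measurable X)
    (hXs : ∀ n, Measurable (Xs n)) (hindep : iIndepFun Xs μ)
    (hident : ∀ n, IdentDistrib (Xs n) X μ μ) (hint : Integrable X μ)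
    (htail : ∫ ω in {ω | t ≤ |X ω|}, |X ω| ∂μ ≤ 1 - α) {m : ℕ} (hm : ⌊t⌋₊ ≤ m) :
    ENNReal.ofReal α * ∑' j, (if m ≤ j then μ {ω | (j : ℝ) + 1 ≤ |X ω|} else 0) ≤
      μ (⋃ j, ⋃ (_ : m ≤ j), {ω | (j : ℝ) + 1 ≤ |Xs j ω|}) := by
  have hF : ∀ j : ℕ, μ.real {ω | (j : ℝ) + 1 ≤ |Xs j ω|} = μ.real {ω | (j : ℝ) + 1 ≤ |X ω|} :=
    fun j => congrArg ENNReal.toReal <| (hident j).measure_mem_eq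
      (measurableSet_le measurable_const measurable_abs :
        MeasurableSet {y : ℝ | (j : ℝ) + 1 ≤ |y|})
  rw [ENNReal.tsum_eq_iSup_sum, ENNReal.mul_iSup]
  refine iSup_le fun s => ?_
  rw [← sum_filter]
  set s' := s.filter (m ≤ ·)
  have hs' : ∀ j ∈ s', ⌊t⌋₊ ≤ j := fun j hj => hm.trans (mem_filter.1 hj).2
  have hsum : ∑ j ∈ s', μ.real {ω | (j : ℝ) + 1 ≤ |Xs j ω|} ≤ 1 - α := by
    simp only [hF]
    exact (sum_measureReal_le_setIntegral hX hint hs').trans htail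
  have hbonf := (iIndepSet_add_one_le_abs hXs hindep).mul_sum_measureReal_le
    (fun j => measurableSet_le measurable_const (hXs j).abs) s' hsum
  calc ENNReal.ofReal α * ∑ j ∈ s', μ {ω | (j : ℝ) + 1 ≤ |X ω|}
      = ENNReal.ofReal (α * ∑ j ∈ s', μ.real {ω | (j : ℝ) + 1 ≤ |Xs j ω|}) := by
        rw [ENNReal.ofReal_mul' (sum_nonneg fun _ _ => measureReal_nonneg),
          ENNReal.ofReal_sum_of_nonneg fun _ _ => measureReal_nonneg]
        exact congrArg _ <| sum_congr rfl fun j _ => by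
          rw [hF, ofReal_measureReal (measure_ne_top _ _)]
    _ ≤ μ (⋃ j ∈ s', {ω | (j : ℝ) + 1 ≤ |Xs j ω|}) :=
        (ENNReal.ofReal_le_ofReal hbonf).trans_eq (ofReal_measureReal (measure_ne_top _ _))
    _ ≤ μ (⋃ j, ⋃ (_ : m ≤ j), {ω | (j : ℝ) + 1 ≤ |Xs j ω|}) :=
        measure_mono (Set.biUnion_subset_biUnion_left fun j hj => (mem_filter.1 hj).2)

theorem ofReal_mul_tsum_le_lintegral_evalG [IsProbabilityMeasure μ] (hX : Measurable X)
    (hXs : ∀ n, Measurable (Xs n)) (hindep : iIndepFun Xs μ)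
    (hident : ∀ n, IdentDistrib (Xs n) X μ μ) (hint : Integrable X μ) {G : ℝ → ℝ}
    (hG : Monotone fun n : ℕ => ENNReal.ofReal (G n)) (ht : 1 ≤ t)
    (htail : ∫ ω in {ω | t ≤ |X ω|}, |X ω| ∂μ ≤ 1 - α) :
    ENNReal.ofReal α *
        ∑' j, (if ⌊t⌋₊ ≤ j then μ {ω | (j : ℝ) + 1 ≤ |X ω|} else 0) * ENNReal.ofReal (G j) ≤
      ∫⁻ ω, evalG G (lastDev Xs (1 / 2) ω) ∂μ := by
  set N := ⌊t⌋₊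
  set g : ℕ → ℝ≥0∞ := fun n => ENNReal.ofReal (G n)
  set A : ℕ → Set Ω := fun n => ⋃ j, ⋃ (_ : max n N ≤ j), {ω | (j : ℝ) + 1 ≤ |Xs j ω|}
  have hA : ∀ n, MeasurableSet (A n) := fun n => MeasurableSet.iUnion fun j =>
    MeasurableSet.iUnion fun _ => measurableSet_le measurable_const (hXs j).abs
  have hAL : ∀ n ω, ω ∈ A n → (n : ℕ∞) ≤ lastDev Xs (1 / 2) ω := fun n ω hω => by
    obtain ⟨j, hj, hωj⟩ := Set.mem_iUnion₂.1 hω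
    have hN : 1 ≤ N := Nat.le_floor (by exact_mod_cast ht)
    exact (Nat.cast_le.2 ((le_max_left n N).trans hj)).trans
      (le_lastDev_of_add_one_le_abs (hN.trans ((le_max_right n N).trans hj)) hωj)
  calc ENNReal.ofReal α *
        ∑' j, (if N ≤ j then μ {ω | (j : ℝ) + 1 ≤ |X ω|} else 0) * g j
      = ∑' n, increment g n *
          (ENNReal.ofReal α * ∑' j, if max n N ≤ j then μ {ω | (j : ℝ) + 1 ≤ |X ω|} else 0) := by
        rw [tsum_mul_eq_tsum_increment_mul hG, ← ENNReal.tsum_mul_left]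
        refine tsum_congr fun n => ?_
        simp only [max_le_iff, ite_and]
        ring
    _ ≤ ∑' n, increment g n * μ (A n) := ENNReal.tsum_le_tsum fun n => by
        gcongr
        exact ofReal_mul_tsum_le_measure_iUnion hX hXs hindep hident hint htail (le_max_right n N)
    _ = ∫⁻ ω, ∑' n, increment g n * (A n).indicator 1 ω ∂μ := by
        rw [lintegral_tsum fun n => ((measurable_one.indicator (hA n)).const_mul _).aemeasurable]
        refine tsum_congr fun n => ?_
        rw [lintegral_const_mul _ (measurable_one.indicator (hA n)), lintegral_indicator_one (hA n)]
    _ ≤ ∫⁻ ω, evalG G (lastDev Xs (1 / 2) ω) ∂μ := lintegral_mono fun ω => by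
        refine (ENNReal.tsum_le_tsum fun n => ?_).trans (tsum_ite_increment_le_evalG hG _)
        by_cases hω : ω ∈ A n
        · rw [Set.indicator_of_mem hω, Pi.one_apply, mul_one, if_pos (hAL n ω hω)]
        · simp [hω]

end Probability

theorem stmt5 {Ω : Type*} [MeasurableSpace Ω] (μ : Measure Ω) [IsProbabilityMeasure μ]
    (X : Ω → ℝ) (Xs : ℕ → Ω → ℝ)
    (hX : Measurable X) (hXs : ∀ n, Measurable (Xs n))
    (hindep : iIndepFun Xs μ)
    (hident : ∀ n, IdentDistrib (Xs n) X μ μ)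
    (hint : Integrable X μ)
    (G : ℝ → ℝ) (hG : Moderate G)
    (c : ℝ) (hc : ∀ t ≥ 0, G (2 * t) ≤ c * G t)
    (α : ℝ) (hα : α ∈ Set.Ioo (0 : ℝ) 1)
    (t : ℝ) (ht : 1 ≤ t)
    (htail : ∫ ω in {ω | t ≤ |X ω|}, |X ω| ∂μ ≤ 1 - α) :
    ∫⁻ ω, ENNReal.ofReal (|X ω| * G |X ω|) ∂μ ≤
      ENNReal.ofReal (4 * c ^ 2) * (ENNReal.ofReal (t * G t) +
        ENNReal.ofReal α⁻¹ * ∫⁻ ω, evalG G (lastDev Xs (1 / 2) ω) ∂μ) := by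
  obtain ⟨hpos, hmono, -⟩ := hG
  have hGnat : Monotone fun n : ℕ => ENNReal.ofReal (G n) := fun m n hmn =>
    ENNReal.ofReal_le_ofReal (hmono (Set.mem_Ici.2 m.cast_nonneg) (Set.mem_Ici.2 n.cast_nonneg)
      (Nat.cast_le.2 hmn))
  calc ∫⁻ ω, ENNReal.ofReal (|X ω| * G |X ω|) ∂μ
      ≤ ∫⁻ ω, ENNReal.ofReal (4 * c ^ 2) * (ENNReal.ofReal (t * G t) +
          ∑' j : ℕ, if ⌊t⌋₊ ≤ j ∧ (j : ℝ) + 1 ≤ |X ω| then ENNReal.ofReal (G j) else 0) ∂μ :=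
        lintegral_mono fun ω => ofReal_mul_le_head_add_tsum hpos hmono hc ht (abs_nonneg _)
    _ = ENNReal.ofReal (4 * c ^ 2) * (ENNReal.ofReal (t * G t) +
          ∑' j, (if ⌊t⌋₊ ≤ j then μ {ω | (j : ℝ) + 1 ≤ |X ω|} else 0) * ENNReal.ofReal (G j)) := by
        rw [lintegral_const_mul' _ _ ENNReal.ofReal_ne_top, lintegral_add_left measurable_const,
          lintegral_const, measure_univ, mul_one, lintegral_tsum_ite_add_one_le_abs hX]
    _ ≤ ENNReal.ofReal (4 * c ^ 2) * (ENNReal.ofReal (t * G t) +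
          ENNReal.ofReal α⁻¹ * ∫⁻ ω, evalG G (lastDev Xs (1 / 2) ω) ∂μ) := by
        gcongr
        refine le_of_eq_of_le ?_ (mul_le_mul_right
          (ofReal_mul_tsum_le_lintegral_evalG hX hXs hindep hident hint hGnat ht htail) _)
        rw [← mul_assoc, ← ENNReal.ofReal_mul (inv_nonneg.2 hα.1.le), inv_mul_cancel₀ hα.1.ne',
          ENNReal.ofReal_one, one_mul]
end

section
/- Let G : [0,∞) → (0,∞) be non-decreasing and let X and (X_n)_{n≥1} be i.i.d. symmetric random variables. Then E[G(L_1)] ≤ G(0) + 12·S(X,G,1/8), where L_1 is the last time n with |S_n/n| ≥ 1 and S(X,G,1/8) := Σ_{n≥1} n^{-1}·G(n)·P[|S_n/n| ≥ 1/8] (both sides may be +∞). -/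
open MeasureTheory ProbabilityTheory ENNReal

/-- The series `S(X,G,a) = Σ_{n ≥ 1} n⁻¹ G(n) P[|S_n/n| ≥ a]`, valued in `ℝ≥0∞`. -/
noncomputable def devSeries {Ω : Type*} [MeasurableSpace Ω] (μ : Measure Ω)
    (X : ℕ → Ω → ℝ) (G : ℝ → ℝ) (a : ℝ) : ℝ≥0∞ :=
  ∑' n : {n : ℕ // 1 ≤ n}, ((n : ℕ) : ℝ≥0∞)⁻¹ * ENNReal.ofReal (G (n : ℕ)) *
    μ {ω | a ≤ |partialSum X (n : ℕ) ω / (n : ℕ)|}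

/-!
Lévy's reflection principle: for independent symmetric summands, reversing the signs of all
summands after the first time `|S_k| ≥ t` preserves the joint law, whence
`P(max_{k ≤ N} |S_k| ≥ t) ≤ 2 P(|S_N| ≥ t)`.

If `2^j ≤ L_1 < 2^{j+1}`, some `n` in that dyadic block has `|S_n| ≥ n ≥ 2^j`; by Lévy's inequality
this has probability at most `2 P(|S_k/k| ≥ 1/8)` for every `k ∈ (2^{j+1}, 2^{j+2}]`, and averaging
over these `2^{j+1}` values of `k` (with `1/2^{j+1} ≤ 2/k` and `G` non-decreasing) bounds
`G(2^{j+1}) P(block j)` by four times the `j`-th block of the series. The blocks are disjoint.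
On `{L_1 = ∞}` infinitely many block events occur, so the pointwise bound
`G(L_1) ≤ G(0) + Σ_j G(2^{j+1}) 1_{block j}` also holds there.
-/

open Finset

def tailNeg (j : ℕ) (x : ℕ → ℝ) (i : ℕ) : ℝ := if j ≤ i then -x i else x i

lemma measurable_tailNeg (j : ℕ) : Measurable (tailNeg j) :=
  measurable_pi_iff.2 fun i => by
    by_cases h : j ≤ i <;> simp only [tailNeg, h, if_true, if_false]
    exacts [(measurable_pi_apply i).neg, measurable_pi_apply i]

lemma sum_range_tailNeg_of_le {j k : ℕ} (h : k ≤ j) (x : ℕ → ℝ) :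
    ∑ i ∈ range k, tailNeg j x i = ∑ i ∈ range k, x i :=
  sum_congr rfl fun i hi => if_neg (by rw [mem_range] at hi; omega)

lemma sum_range_tailNeg_of_ge {j N : ℕ} (h : j ≤ N) (x : ℕ → ℝ) :
    ∑ i ∈ range N, tailNeg j x i = 2 * ∑ i ∈ range j, x i - ∑ i ∈ range N, x i := by
  have htail : ∑ i ∈ Ico j N, tailNeg j x i = -∑ i ∈ Ico j N, x i := by
    rw [← sum_neg_distrib]
    exact sum_congr rfl fun i hi => if_pos (mem_Ico.1 hi).1
  rw [← sum_range_add_sum_Ico (tailNeg j x) h, ← sum_range_add_sum_Ico x h,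
    sum_range_tailNeg_of_le le_rfl, htail]
  ring

def exceedSet (t : ℝ) (k : ℕ) : Set (ℕ → ℝ) := {x | t ≤ |∑ i ∈ range k, x i|}

lemma measurableSet_exceedSet (t : ℝ) (k : ℕ) : MeasurableSet (exceedSet t k) :=
  measurableSet_le measurable_const (by fun_prop)

lemma preimage_tailNeg_exceedSet {t : ℝ} {j k : ℕ} (h : k ≤ j) :
    tailNeg j ⁻¹' exceedSet t k = exceedSet t k := by
  ext x
  simp only [exceedSet, Set.mem_preimage, Set.mem_ofPred_eq, sum_range_tailNeg_of_le h]

lemma preimage_tailNeg_disjointed_exceedSet (t : ℝ) (j : ℕ) :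
    tailNeg j ⁻¹' disjointed (exceedSet t) j = disjointed (exceedSet t) j := by
  simp only [disjointed_eq_inter_compl, Set.preimage_inter, Set.preimage_iInter,
    Set.preimage_compl, preimage_tailNeg_exceedSet le_rfl]
  congr! 4 with i hi
  rw [preimage_tailNeg_exceedSet hi.le]

lemma disjointed_exceedSet_diff_subset {t : ℝ} {j N : ℕ} (hj : j ≤ N) :
    disjointed (exceedSet t) j \ exceedSet t N ⊆
      tailNeg j ⁻¹' (disjointed (exceedSet t) j ∩ exceedSet t N) := by
  rintro x ⟨hxD, hxN⟩
  refine ⟨(Set.ext_iff.1 (preimage_tailNeg_disjointed_exceedSet t j) x).2 hxD, ?_⟩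
  have hxj : t ≤ |∑ i ∈ range j, x i| := disjointed_subset _ j hxD
  simp only [exceedSet, Set.mem_ofPred_eq, not_le, sum_range_tailNeg_of_ge hj] at hxN ⊢
  have := abs_sub_abs_le_abs_sub (2 * ∑ i ∈ range j, x i) (∑ i ∈ range N, x i)
  rw [abs_mul, abs_two] at this
  linarith

lemma measure_disjointed_exceedSet_le {ν : Measure (ℕ → ℝ)} (hν : ∀ j, ν.map (tailNeg j) = ν)
    (t : ℝ) {j N : ℕ} (hj : j ≤ N) :
    ν (disjointed (exceedSet t) j) ≤ 2 * ν (disjointed (exceedSet t) j ∩ exceedSet t N) := by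
  have hD : MeasurableSet (disjointed (exceedSet t) j ∩ exceedSet t N) :=
    (MeasurableSet.disjointed (measurableSet_exceedSet t) j).inter (measurableSet_exceedSet t N)
  calc ν (disjointed (exceedSet t) j)
      ≤ ν (disjointed (exceedSet t) j ∩ exceedSet t N) +
          ν (disjointed (exceedSet t) j \ exceedSet t N) := measure_le_inter_add_sdiff _ _ _
    _ ≤ ν (disjointed (exceedSet t) j ∩ exceedSet t N) +
          ν (tailNeg j ⁻¹' (disjointed (exceedSet t) j ∩ exceedSet t N)) := by
        gcongr
        exact disjointed_exceedSet_diff_subset hj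
    _ = 2 * ν (disjointed (exceedSet t) j ∩ exceedSet t N) := by
        rw [(MeasurePreserving.mk (measurable_tailNeg j) (hν j)).measure_preimage
          hD.nullMeasurableSet, two_mul]

theorem measure_exists_le_abs_sum_range_le {ν : Measure (ℕ → ℝ)}
    (hν : ∀ j, ν.map (tailNeg j) = ν) (N : ℕ) (t : ℝ) :
    ν {x | ∃ k ≤ N, t ≤ |∑ i ∈ range k, x i|} ≤ 2 * ν (exceedSet t N) := by
  have hcover : {x | ∃ k ≤ N, t ≤ |∑ i ∈ range k, x i|} =
      ⋃ j ∈ range (N + 1), disjointed (exceedSet t) j := by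
    rw [biUnion_range_succ_disjointed, partialSups_eq_biSup]
    ext x
    simp [exceedSet]
  calc ν {x | ∃ k ≤ N, t ≤ |∑ i ∈ range k, x i|}
      ≤ ∑ j ∈ range (N + 1), ν (disjointed (exceedSet t) j) :=
        hcover ▸ measure_biUnion_finset_le _ _
    _ ≤ ∑ j ∈ range (N + 1), 2 * ν (disjointed (exceedSet t) j ∩ exceedSet t N) :=
        sum_le_sum fun j hj =>
          measure_disjointed_exceedSet_le hν t (Nat.lt_succ_iff.1 (mem_range.1 hj))
    _ = 2 * ν (⋃ j ∈ range (N + 1), disjointed (exceedSet t) j ∩ exceedSet t N) := by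
        rw [measure_biUnion_finset, mul_sum]
        · exact fun i _ j _ hij =>
            (disjoint_disjointed _ hij).mono Set.inter_subset_left Set.inter_subset_left
        · exact fun j _ =>
            (MeasurableSet.disjointed (measurableSet_exceedSet t) j).inter
              (measurableSet_exceedSet t N)
    _ ≤ 2 * ν (exceedSet t N) := by
        gcongr
        exact Set.iUnion₂_subset fun _ _ => Set.inter_subset_right

lemma ofReal_mul_le_two_mul_sum_Ioc {G : ℝ → ℝ} (hG : MonotoneOn G (Set.Ici 0)) {m : ℕ}
    (hm : 1 ≤ m) {a : ℝ≥0∞} {p : ℕ → ℝ≥0∞} (hp : ∀ k ∈ Ioc m (2 * m), a ≤ p k) :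
    ENNReal.ofReal (G m) * a ≤
      2 * ∑ k ∈ Ioc m (2 * m), (k : ℝ≥0∞)⁻¹ * ENNReal.ofReal (G k) * p k := by
  have hm₀ : (m : ℝ≥0∞) ≠ 0 := by simp; omega
  have hinv : (m : ℝ≥0∞)⁻¹ = 2 * ((2 * m : ℕ) : ℝ≥0∞)⁻¹ := by
    rw [Nat.cast_mul, Nat.cast_two, ENNReal.mul_inv (by simp) (by simp), ← mul_assoc,
      ENNReal.mul_inv_cancel (by simp) (by simp), one_mul]
  calc ENNReal.ofReal (G m) * a
      = ∑ _k ∈ Ioc m (2 * m), (m : ℝ≥0∞)⁻¹ * (ENNReal.ofReal (G m) * a) := by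
        rw [sum_const, Nat.card_Ioc, show 2 * m - m = m by omega, nsmul_eq_mul, ← mul_assoc,
          ENNReal.mul_inv_cancel hm₀ (by simp), one_mul]
    _ ≤ ∑ k ∈ Ioc m (2 * m), 2 * ((k : ℝ≥0∞)⁻¹ * ENNReal.ofReal (G k) * p k) := by
        refine sum_le_sum fun k hk => ?_
        obtain ⟨hmk, hk2m⟩ := mem_Ioc.1 hk
        have hGk : ENNReal.ofReal (G m) ≤ ENNReal.ofReal (G k) :=
          ENNReal.ofReal_le_ofReal (hG (Set.mem_Ici.2 m.cast_nonneg) (Set.mem_Ici.2 k.cast_nonneg)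
            (by exact_mod_cast hmk.le))
        have hinvk : (m : ℝ≥0∞)⁻¹ ≤ 2 * (k : ℝ≥0∞)⁻¹ := by
          rw [hinv]
          gcongr
        calc (m : ℝ≥0∞)⁻¹ * (ENNReal.ofReal (G m) * a)
            ≤ 2 * (k : ℝ≥0∞)⁻¹ * (ENNReal.ofReal (G k) * p k) := by gcongr; exact hp k hk
          _ = 2 * ((k : ℝ≥0∞)⁻¹ * ENNReal.ofReal (G k) * p k) := by ring
    _ = 2 * ∑ k ∈ Ioc m (2 * m), (k : ℝ≥0∞)⁻¹ * ENNReal.ofReal (G k) * p k := (mul_sum _ _ _).symm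

lemma sum_range_sum_Ioc_two_pow (g : ℕ → ℝ≥0∞) (J : ℕ) :
    ∑ j ∈ range J, ∑ k ∈ Ioc (2 ^ (j + 1)) (2 ^ (j + 2)), g k = ∑ k ∈ Ioc 2 (2 ^ (J + 1)), g k := by
  induction J with
  | zero => simp
  | succ J ih =>
    rw [sum_range_succ, ih, sum_Ioc_consecutive]
    · exact Nat.le_self_pow (Nat.succ_ne_zero J) 2
    · exact Nat.pow_le_pow_right two_pos (Nat.le_succ _)

lemma tsum_sum_Ioc_two_pow_le (g : ℕ → ℝ≥0∞) :
    ∑' j, ∑ k ∈ Ioc (2 ^ (j + 1)) (2 ^ (j + 2)), g k ≤ ∑' k : {k : ℕ // 1 ≤ k}, g k := by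
  refine ENNReal.tsum_le_of_sum_range_le fun J => ?_
  rw [sum_range_sum_Ioc_two_pow,
    ← sum_subtype_of_mem g (p := (1 ≤ ·)) fun k hk => by have := (mem_Ioc.1 hk).1; omega]
  exact ENNReal.sum_le_tsum _

lemma map_tailNeg_infinitePi {P : ℕ → Measure ℝ} [∀ i, IsProbabilityMeasure (P i)]
    (hP : ∀ i, (P i).map Neg.neg = P i) (j : ℕ) :
    (Measure.infinitePi P).map (tailNeg j) = Measure.infinitePi P := by
  have hcoord : tailNeg j = fun x i => (if j ≤ i then Neg.neg else id) (x i) := by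
    funext x i
    unfold tailNeg
    split_ifs <;> rfl
  rw [hcoord, Measure.infinitePi_map_pi]
  · congr! with i
    split_ifs
    exacts [hP i, Measure.map_id]
  · intro i
    split_ifs
    exacts [measurable_neg, measurable_id]

section PartialSums

variable {Ω : Type*} {Xs : ℕ → Ω → ℝ}

def dyadicDeviation (Xs : ℕ → Ω → ℝ) (j : ℕ) : Set Ω :=
  ⋃ n ∈ Ico (2 ^ j : ℕ) (2 ^ (j + 1)), {ω | (n : ℝ) ≤ |partialSum Xs n ω|}

lemma exists_mem_dyadicDeviation_of_lt_lastDev {ω : Ω} {W : ℕ}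
    (h : (W : ℕ∞) < lastDev Xs 1 ω) : ∃ j, ω ∈ dyadicDeviation Xs j ∧ W < 2 ^ (j + 1) := by
  obtain ⟨n, ⟨hn₁, hn⟩, hWn⟩ := lt_biSup_iff.1 h
  have hn₀ : n ≠ 0 := by omega
  refine ⟨Nat.log 2 n, ?_, (Nat.cast_lt.1 hWn).trans (Nat.lt_pow_succ_log_self one_lt_two n)⟩
  simp only [dyadicDeviation, Set.mem_iUnion, mem_Ico]
  refine ⟨n, ⟨Nat.pow_log_le_self 2 hn₀, Nat.lt_pow_succ_log_self one_lt_two n⟩, ?_⟩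
  rwa [abs_div, Nat.abs_cast, one_le_div (by positivity)] at hn

lemma evalG_lastDev_le {G : ℝ → ℝ} (hGpos : ∀ t ≥ 0, 0 < G t)
    (hGmono : MonotoneOn G (Set.Ici 0)) (ω : Ω) :
    evalG G (lastDev Xs 1 ω) ≤ ENNReal.ofReal (G 0) +
      ∑' j, (dyadicDeviation Xs j).indicator (fun _ => ENNReal.ofReal (G (2 ^ (j + 1)))) ω := by
  have hG : ∀ {n : ℕ} {j : ℕ}, n ≤ 2 ^ (j + 1) →
      ENNReal.ofReal (G n) ≤ ENNReal.ofReal (G ((2 : ℝ) ^ (j + 1))) := fun h =>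
    ENNReal.ofReal_le_ofReal (hGmono (Set.mem_Ici.2 (Nat.cast_nonneg _))
      (Set.mem_Ici.2 (by positivity)) (by exact_mod_cast h))
  cases hL : lastDev Xs 1 ω using ENat.recTopCoe with
  | top =>
    have hJ : {j | ω ∈ dyadicDeviation Xs j}.Infinite :=
      Set.infinite_of_forall_exists_gt fun a => by
        obtain ⟨j, hj, hlt⟩ := exists_mem_dyadicDeviation_of_lt_lastDev
          (W := 2 ^ (a + 1)) (hL ▸ ENat.natCast_lt_top _)
        exact ⟨j, hj, by have := (Nat.pow_lt_pow_iff_right (by norm_num)).1 hlt; omega⟩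
    have := hJ.to_subtype
    set f : ℕ → ℝ≥0∞ := fun j =>
      (dyadicDeviation Xs j).indicator (fun _ => ENNReal.ofReal (G (2 ^ (j + 1)))) ω
    have hsum : ∑' j, f j = ⊤ := by
      refine top_le_iff.1 ?_
      calc ⊤ = ∑' _j : {j | ω ∈ dyadicDeviation Xs j}, ENNReal.ofReal (G 1) :=
            (ENNReal.tsum_const_eq_top_of_ne_zero (by simpa using hGpos 1 zero_le_one)).symm
        _ ≤ ∑' j : {j | ω ∈ dyadicDeviation Xs j}, f j :=
            ENNReal.tsum_le_tsum fun j => by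
              simp only [f, Set.indicator_of_mem (show ω ∈ dyadicDeviation Xs j from j.2)]
              exact_mod_cast hG (n := 1) Nat.one_le_two_pow
        _ ≤ ∑' j, f j := ENNReal.tsum_comp_le_tsum_of_injective Subtype.val_injective f
    rw [hsum]
    exact le_top
  | coe n =>
    rcases Nat.eq_zero_or_pos n with rfl | hn
    · show ENNReal.ofReal (G ((0 : ℕ) : ℝ)) ≤ _
      rw [Nat.cast_zero]
      exact le_self_add
    obtain ⟨j, hj, hnj⟩ := exists_mem_dyadicDeviation_of_lt_lastDev (W := n - 1)
      (by rw [hL]; exact_mod_cast Nat.sub_one_lt_of_lt hn)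
    calc evalG G n = ENNReal.ofReal (G n) := rfl
      _ ≤ ENNReal.ofReal (G (2 ^ (j + 1))) := hG (by omega)
      _ = (dyadicDeviation Xs j).indicator (fun _ => ENNReal.ofReal (G (2 ^ (j + 1)))) ω :=
          (Set.indicator_of_mem hj (fun _ => ENNReal.ofReal (G (2 ^ (j + 1))))).symm
      _ ≤ _ := (ENNReal.le_tsum j).trans le_add_self

variable [MeasurableSpace Ω] {μ : Measure Ω} [IsProbabilityMeasure μ]

theorem measure_exists_le_abs_partialSum_le (hXs : ∀ i, Measurable (Xs i))
    (hindep : iIndepFun Xs μ) (hsymm : ∀ i, μ.map (fun ω => -Xs i ω) = μ.map (Xs i))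
    (N : ℕ) (t : ℝ) :
    μ {ω | ∃ k ≤ N, t ≤ |partialSum Xs k ω|} ≤ 2 * μ {ω | t ≤ |partialSum Xs N ω|} := by
  have hY : Measurable fun ω i => Xs i ω := measurable_pi_iff.2 hXs
  have : ∀ i, IsProbabilityMeasure (μ.map (Xs i)) :=
    fun i => Measure.isProbabilityMeasure_map (hXs i).aemeasurable
  have hν : ∀ j, (μ.map fun ω i => Xs i ω).map (tailNeg j) = μ.map fun ω i => Xs i ω := by
    rw [hindep.map_fun_eq_infinitePi_map hXs]
    refine map_tailNeg_infinitePi fun i => ?_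
    rw [Measure.map_map measurable_neg (hXs i)]
    exact hsymm i
  have h := measure_exists_le_abs_sum_range_le hν N t
  rwa [Measure.map_apply hY, Measure.map_apply hY] at h
  all_goals exact measurableSet_setOfPred.2 (by fun_prop)

lemma measurableSet_dyadicDeviation (hXs : ∀ i, Measurable (Xs i)) (j : ℕ) :
    MeasurableSet (dyadicDeviation Xs j) :=
  Finset.measurableSet_biUnion _ fun _ _ =>
    measurableSet_le measurable_const (Finset.measurable_sum _ fun i _ => hXs i).abs

lemma measure_dyadicDeviation_le (hXs : ∀ i, Measurable (Xs i))
    (hindep : iIndepFun Xs μ) (hsymm : ∀ i, μ.map (fun ω => -Xs i ω) = μ.map (Xs i))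
    {j k : ℕ} (hk : k ∈ Ioc (2 ^ (j + 1) : ℕ) (2 ^ (j + 2))) :
    μ (dyadicDeviation Xs j) ≤ 2 * μ {ω | 1 / 8 ≤ |partialSum Xs k ω / k|} := by
  obtain ⟨hk₁, hk₂⟩ := mem_Ioc.1 hk
  have hk₀ : (0 : ℝ) < k := by exact_mod_cast (Nat.zero_le _).trans_lt hk₁
  calc μ (dyadicDeviation Xs j)
      ≤ μ {ω | ∃ k' ≤ k, (2 : ℝ) ^ j ≤ |partialSum Xs k' ω|} := by
        refine measure_mono fun ω hω => ?_
        simp only [dyadicDeviation, Set.mem_iUnion, mem_Ico, Set.mem_ofPred_eq] at hω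
        obtain ⟨n, ⟨hjn, hnj⟩, hn⟩ := hω
        exact ⟨n, by omega, le_trans (by exact_mod_cast hjn) hn⟩
    _ ≤ 2 * μ {ω | (2 : ℝ) ^ j ≤ |partialSum Xs k ω|} :=
        measure_exists_le_abs_partialSum_le hXs hindep hsymm k _
    _ ≤ 2 * μ {ω | 1 / 8 ≤ |partialSum Xs k ω / k|} := by
        refine mul_le_mul_right (measure_mono fun ω hω => ?_) 2
        have hk₂' : (k : ℝ) ≤ 2 ^ (j + 2) := by exact_mod_cast hk₂
        simp only [Set.mem_ofPred_eq, abs_div, Nat.abs_cast] at hω ⊢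
        rw [le_div_iff₀ hk₀]
        calc 1 / 8 * (k : ℝ) ≤ 1 / 8 * 2 ^ (j + 2) := by gcongr
          _ ≤ 2 ^ j := by rw [pow_add]; linarith [pow_pos (two_pos : (0 : ℝ) < 2) j]
          _ ≤ _ := hω

lemma ofReal_mul_measure_dyadicDeviation_le (hXs : ∀ i, Measurable (Xs i))
    (hindep : iIndepFun Xs μ) (hsymm : ∀ i, μ.map (fun ω => -Xs i ω) = μ.map (Xs i))
    {G : ℝ → ℝ} (hG : MonotoneOn G (Set.Ici 0)) (j : ℕ) :
    ENNReal.ofReal (G (2 ^ (j + 1))) * μ (dyadicDeviation Xs j) ≤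
      4 * ∑ k ∈ Ioc (2 ^ (j + 1) : ℕ) (2 ^ (j + 2)),
        (k : ℝ≥0∞)⁻¹ * ENNReal.ofReal (G k) * μ {ω | 1 / 8 ≤ |partialSum Xs k ω / k|} := by
  have hblock : 2 * 2 ^ (j + 1) = 2 ^ (j + 2) := by ring
  have h := ofReal_mul_le_two_mul_sum_Ioc hG Nat.one_le_two_pow (m := 2 ^ (j + 1))
    fun k hk => measure_dyadicDeviation_le hXs hindep hsymm (hblock ▸ hk)
  rw [hblock, Nat.cast_pow, Nat.cast_ofNat] at h
  refine h.trans_eq ?_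
  rw [mul_sum, mul_sum]
  refine sum_congr rfl fun k _ => by ring

lemma lintegral_evalG_lastDev_le (hXs : ∀ i, Measurable (Xs i)) {G : ℝ → ℝ}
    (hGpos : ∀ t ≥ 0, 0 < G t) (hGmono : MonotoneOn G (Set.Ici 0)) :
    ∫⁻ ω, evalG G (lastDev Xs 1 ω) ∂μ ≤
      ENNReal.ofReal (G 0) + ∑' j, ENNReal.ofReal (G (2 ^ (j + 1))) * μ (dyadicDeviation Xs j) := by
  have hB := measurableSet_dyadicDeviation hXs
  calc ∫⁻ ω, evalG G (lastDev Xs 1 ω) ∂μ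
      ≤ ∫⁻ ω, ENNReal.ofReal (G 0) + ∑' j, (dyadicDeviation Xs j).indicator
          (fun _ => ENNReal.ofReal (G (2 ^ (j + 1)))) ω ∂μ :=
        lintegral_mono (evalG_lastDev_le hGpos hGmono)
    _ = _ := by
        rw [lintegral_add_left measurable_const, lintegral_const, measure_univ, mul_one,
          lintegral_tsum fun j => (measurable_const.indicator (hB j)).aemeasurable]
        simp only [lintegral_indicator_const (hB _)]

end PartialSums

theorem stmt8_general {Ω : Type*} [MeasurableSpace Ω] (μ : Measure Ω) [IsProbabilityMeasure μ]
    (X : Ω → ℝ) (Xs : ℕ → Ω → ℝ)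
    (hXs : ∀ n, Measurable (Xs n))
    (hindep : iIndepFun Xs μ)
    (hident : ∀ n, IdentDistrib (Xs n) X μ μ)
    (hsymm : Measure.map X μ = Measure.map (fun ω => -X ω) μ)
    (G : ℝ → ℝ) (hGpos : ∀ t ≥ 0, 0 < G t) (hGmono : MonotoneOn G (Set.Ici 0)) :
    ∫⁻ ω, evalG G (lastDev Xs 1 ω) ∂μ ≤
      ENNReal.ofReal (G 0) + 12 * devSeries μ Xs G (1 / 8) := by
  have hsymmXs : ∀ i, μ.map (fun ω => -Xs i ω) = μ.map (Xs i) := fun i => by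
    rw [(hident i).map_eq, hsymm]
    exact ((hident i).comp measurable_neg).map_eq
  calc ∫⁻ ω, evalG G (lastDev Xs 1 ω) ∂μ
      ≤ ENNReal.ofReal (G 0) +
          ∑' j, ENNReal.ofReal (G (2 ^ (j + 1))) * μ (dyadicDeviation Xs j) :=
        lintegral_evalG_lastDev_le hXs hGpos hGmono
    _ ≤ ENNReal.ofReal (G 0) + ∑' j, 4 * ∑ k ∈ Ioc (2 ^ (j + 1) : ℕ) (2 ^ (j + 2)),
          (k : ℝ≥0∞)⁻¹ * ENNReal.ofReal (G k) * μ {ω | 1 / 8 ≤ |partialSum Xs k ω / k|} := by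
        refine add_le_add_right (ENNReal.tsum_le_tsum fun j => ?_) _
        exact ofReal_mul_measure_dyadicDeviation_le hXs hindep hsymmXs hGmono j
    _ ≤ ENNReal.ofReal (G 0) + 4 * devSeries μ Xs G (1 / 8) := by
        rw [ENNReal.tsum_mul_left]
        gcongr
        exact tsum_sum_Ioc_two_pow_le _
    _ ≤ ENNReal.ofReal (G 0) + 12 * devSeries μ Xs G (1 / 8) := by gcongr; norm_num

theorem stmt8 {Ω : Type*} [MeasurableSpace Ω] (μ : Measure Ω) [IsProbabilityMeasure μ]
    (X : Ω → ℝ) (Xs : ℕ → Ω → ℝ)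
    (hX : Measurable X) (hXs : ∀ n, Measurable (Xs n))
    (hindep : iIndepFun Xs μ)
    (hident : ∀ n, IdentDistrib (Xs n) X μ μ)
    (hsymm : Measure.map X μ = Measure.map (fun ω => -X ω) μ)
    (G : ℝ → ℝ) (hGpos : ∀ t ≥ 0, 0 < G t) (hGmono : MonotoneOn G (Set.Ici 0)) :
    ∫⁻ ω, evalG G (lastDev Xs 1 ω) ∂μ ≤
      ENNReal.ofReal (G 0) + 12 * devSeries μ Xs G (1 / 8) :=
  stmt8_general μ X Xs hXs hindep hident hsymm G hGpos hGmono
end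

section
/- Let G be a moderate function, let X and (X_n)_{n≥1} be i.i.d. integrable real random variables with E[X]=0, let (X'_n) be an independent copy of the sequence (X_n), and set X*_n := X_n − X'_n, X* := X − X' where X' is an independent copy of X. Then the condition 'for every a > 0, Σ_{n≥1} n^{-1}·G(n)·P[|S_n/n| ≥ a] < ∞' holds for the sequence (X_n) if and only if it holds for the symmetrized sequence (X*_n). -/
/-!
If `(X_n)` satisfies the condition, so does `(X*_n)`: the event `|S*_n/n| ≥ a` forces
`|S_n/n| ≥ a/2` or `|S'_n/n| ≥ a/2`, and `S'_n` has the law of `S_n`. Conversely, the law of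
large numbers for the centred copy gives `P[|S'_n/n| < a/2] ≥ 1/2` for large `n`, and by the
independence of `S_n` and `S'_n`,
`P[|S_n/n| ≥ a] · P[|S'_n/n| < a/2] ≤ P[|S*_n/n| ≥ a/2]`.
Either way the terms of one series at level `a` are eventually at most twice those of the
other at level `a/2`.
-/

open MeasureTheory ProbabilityTheory ENNReal

open Filter Topology

lemma ENNReal.tsum_ne_top_of_eventually_le_mul {ι : Type*} {f g : ι → ℝ≥0∞} {C : ℝ≥0∞}
    (hf : ∀ i, f i ≠ ⊤) (hC : C ≠ ⊤) (hle : ∀ᶠ i in cofinite, f i ≤ C * g i)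
    (hg : ∑' i, g i ≠ ⊤) : ∑' i, f i ≠ ⊤ := by
  set s := {i | ¬ f i ≤ C * g i}
  have hs : s.Finite := eventually_cofinite.1 hle
  have hbound : ∀ i, f i ≤ s.indicator f i + C * g i := by
    intro i
    by_cases hi : i ∈ s
    · simp [Set.indicator_of_mem hi]
    · exact (not_not.1 hi).trans le_add_self
  have hs_sum : ∑' i, s.indicator f i ≠ ⊤ := by
    rw [tsum_eq_sum (s := hs.toFinset) fun i hi => Set.indicator_of_notMem (by simpa using hi) f]
    exact ENNReal.sum_ne_top.2 fun i _ => ne_top_of_le_ne_top (hf i) (Set.indicator_le_self s f i)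
  refine ne_top_of_le_ne_top (add_ne_top.2 ⟨hs_sum, mul_ne_top hC hg⟩) ?_
  rw [← ENNReal.tsum_mul_left, ← ENNReal.tsum_add]
  exact ENNReal.tsum_le_tsum hbound

lemma partialSum_sub_div {Ω : Type*} (Y W : ℕ → Ω → ℝ) (n : ℕ) (ω : Ω) :
    partialSum (fun i ω => Y i ω - W i ω) n ω / n =
      partialSum Y n ω / n - partialSum W n ω / n := by
  simp [partialSum, Finset.sum_sub_distrib, sub_div]

lemma partialSum_comp_eq_sum_map {Ω κ : Type*} (Z : κ → Ω → ℝ) (u : ℕ ↪ κ) (n : ℕ) :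
    partialSum (fun i => Z (u i)) n = ∑ i ∈ (Finset.range n).map u, Z i := by
  ext ω
  simp [partialSum]

section

variable {Ω : Type*} [MeasurableSpace Ω] {μ : Measure Ω}

lemma measure_le_abs_sub_le_add (f g : Ω → ℝ) (a : ℝ) :
    μ {ω | a ≤ |f ω - g ω|} ≤ μ {ω | a / 2 ≤ |f ω|} + μ {ω | a / 2 ≤ |g ω|} := by
  refine (measure_mono fun ω hω => ?_).trans (measure_union_le _ _)
  by_contra h
  simp only [Set.mem_union, Set.mem_ofPred_eq, not_or, not_le] at hω h
  linarith [abs_sub (f ω) (g ω)]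

lemma ProbabilityTheory.IndepFun.measure_le_abs_mul_measure_abs_lt_le {f g : Ω → ℝ}
    (hfg : IndepFun f g μ) (a b : ℝ) :
    μ {ω | a + b ≤ |f ω|} * μ {ω | |g ω| < b} ≤ μ {ω | a ≤ |f ω - g ω|} := by
  refine (hfg.measure_inter_preimage_eq_mul {x | a + b ≤ |x|} {x | |x| < b}
    (measurableSet_le measurable_const measurable_abs)
    (measurableSet_lt measurable_abs measurable_const)).symm.trans_le
    (measure_mono fun ω ⟨(hf : a + b ≤ |f ω|), (hg : |g ω| < b)⟩ => ?_)
  show a ≤ |f ω - g ω|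
  linarith [abs_sub_abs_le_abs_sub (f ω) (g ω)]

lemma ProbabilityTheory.IndepFun.measure_le_abs_le_two_mul_measure_le_abs_sub
    [IsProbabilityMeasure μ] {f g : Ω → ℝ} (hfg : IndepFun f g μ) (hg : Measurable g) {a : ℝ}
    (hsmall : μ {ω | a / 2 ≤ |g ω|} ≤ 2⁻¹) :
    μ {ω | a ≤ |f ω|} ≤ 2 * μ {ω | a / 2 ≤ |f ω - g ω|} := by
  have hlarge : 2⁻¹ ≤ μ {ω | |g ω| < a / 2} := by
    have hcompl : {ω | |g ω| < a / 2} = {ω | a / 2 ≤ |g ω|}ᶜ := by ext; simp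
    rw [hcompl, prob_compl_eq_one_sub (measurableSet_le measurable_const hg.abs),
      ← ENNReal.one_sub_inv_two]
    exact tsub_le_tsub_left hsmall 1
  calc μ {ω | a ≤ |f ω|} = 2 * (μ {ω | a / 2 + a / 2 ≤ |f ω|} * 2⁻¹) := by
        rw [add_halves, mul_comm, mul_assoc, ENNReal.inv_mul_cancel two_ne_zero ofNat_ne_top,
          mul_one]
    _ ≤ 2 * (μ {ω | a / 2 + a / 2 ≤ |f ω|} * μ {ω | |g ω| < a / 2}) := by gcongr
    _ ≤ 2 * μ {ω | a / 2 ≤ |f ω - g ω|} := by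
        gcongr; exact hfg.measure_le_abs_mul_measure_abs_lt_le _ _

lemma devSeries_lt_top_of_eventually_le [IsFiniteMeasure μ] {Y W : ℕ → Ω → ℝ} {G : ℝ → ℝ}
    {a b : ℝ} {C : ℝ≥0∞} (hC : C ≠ ⊤)
    (hle : ∀ᶠ n in atTop, μ {ω | a ≤ |partialSum Y n ω / n|} ≤
      C * μ {ω | b ≤ |partialSum W n ω / n|})
    (hW : devSeries μ W G b < ⊤) : devSeries μ Y G a < ⊤ := by
  refine lt_top_iff_ne_top.2 (ENNReal.tsum_ne_top_of_eventually_le_mul (fun n => ?_) hC ?_ hW.ne)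
  · have : ((n : ℕ) : ℝ≥0∞) ≠ 0 := by exact_mod_cast (Nat.one_le_iff_ne_zero.1 n.2)
    finiteness
  · rw [← Nat.cofinite_eq_atTop] at hle
    filter_upwards [Subtype.val_injective.tendsto_cofinite.eventually hle] with n hn
    calc _ ≤ ((n : ℕ) : ℝ≥0∞)⁻¹ * ENNReal.ofReal (G n) *
          (C * μ {ω | b ≤ |partialSum W n ω / n|}) := by gcongr
      _ = _ := by ring

lemma ProbabilityTheory.iIndepFun.indepFun_finsetSum_finsetSum {ι : Type*} {f : ι → Ω → ℝ}
    (hf : iIndepFun f μ) (hmeas : ∀ i, Measurable (f i)) {S T : Finset ι} (hST : Disjoint S T) :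
    IndepFun (∑ i ∈ S, f i) (∑ i ∈ T, f i) μ := by
  have hsum : ∀ U : Finset ι, Measurable fun v : U → ℝ => ∑ i, v i := fun U =>
    Finset.measurable_sum _ fun i _ => measurable_pi_apply i
  convert (hf.indepFun_finset S T hST hmeas).comp (hsum S) (hsum T) using 1 <;>
    · ext ω
      simp only [Finset.sum_apply, Function.comp_apply]
      exact (Finset.sum_coe_sort _ _).symm

lemma ProbabilityTheory.iIndepFun.indepFun_partialSum_comp {κ : Type*} {Z : κ → Ω → ℝ}
    (hZ : iIndepFun Z μ) (hmeas : ∀ k, Measurable (Z k)) {u v : ℕ ↪ κ}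
    (huv : ∀ i j, u i ≠ v j) (n : ℕ) :
    IndepFun (partialSum (fun i => Z (u i)) n) (partialSum (fun i => Z (v i)) n) μ := by
  rw [partialSum_comp_eq_sum_map, partialSum_comp_eq_sum_map]
  refine hZ.indepFun_finsetSum_finsetSum hmeas (Finset.disjoint_left.2 fun k hu hv => ?_)
  obtain ⟨i, -, rfl⟩ := Finset.mem_map.1 hu
  obtain ⟨j, -, hj⟩ := Finset.mem_map.1 hv
  exact huv i j hj.symm

lemma identDistrib_partialSum {Ω' : Type*} [MeasurableSpace Ω'] {ν : Measure Ω'}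
    {Y : ℕ → Ω → ℝ} {W : ℕ → Ω' → ℝ} (hY : iIndepFun Y μ) (hW : iIndepFun W ν)
    (h : ∀ i, IdentDistrib (Y i) (W i) μ ν) (n : ℕ) :
    IdentDistrib (partialSum Y n) (partialSum W n) μ ν :=
  (IdentDistrib.pi h hY hW).comp (Finset.measurable_sum _ fun i _ => measurable_pi_apply i)

lemma tendsto_measure_le_abs_partialSum_div [IsFiniteMeasure μ] {W : ℕ → Ω → ℝ}
    (hint : Integrable (W 0) μ) (hindep : Pairwise fun i j => IndepFun (W i) (W j) μ)
    (hident : ∀ i, IdentDistrib (W i) (W 0) μ μ) (hcent : μ[W 0] = 0) {ε : ℝ} (hε : 0 < ε) :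
    Tendsto (fun n : ℕ => μ {ω | ε ≤ |partialSum W n ω / n|}) atTop (𝓝 0) := by
  have hslln := strong_law_ae W hint hindep hident
  rw [hcent] at hslln
  have hmeas : ∀ n : ℕ, AEStronglyMeasurable (fun ω => partialSum W n ω / n) μ := fun n =>
    ((Finset.aemeasurable_fun_sum _ fun i _ =>
      (hident i).aemeasurable_fst).div_const _).aestronglyMeasurable
  have hae : ∀ᵐ ω ∂μ, Tendsto (fun n : ℕ => partialSum W n ω / n) atTop (𝓝 0) := by
    filter_upwards [hslln] with ω hω
    simpa [partialSum, div_eq_inv_mul] using hω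
  simpa only [sub_zero, Real.norm_eq_abs] using
    tendstoInMeasure_iff_norm.1 (tendstoInMeasure_of_tendsto_ae hmeas hae) ε hε

lemma devSeries_sub_lt_top_of_identDistrib [IsFiniteMeasure μ] {Y W : ℕ → Ω → ℝ} {G : ℝ → ℝ}
    (hident : ∀ n, IdentDistrib (partialSum W n) (partialSum Y n) μ μ)
    (hY : ∀ a > (0 : ℝ), devSeries μ Y G a < ⊤) {a : ℝ} (ha : 0 < a) :
    devSeries μ (fun n ω => Y n ω - W n ω) G a < ⊤ := by
  refine devSeries_lt_top_of_eventually_le (C := 2) ofNat_ne_top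
    (Eventually.of_forall fun n => ?_) (hY (a / 2) (half_pos ha))
  have hW : μ {ω | a / 2 ≤ |partialSum W n ω / n|} =
      μ {ω | a / 2 ≤ |partialSum Y n ω / n|} :=
    (hident n).measure_mem_eq (measurableSet_le measurable_const (measurable_id.div_const _).abs)
  simp only [partialSum_sub_div]
  calc _ ≤ _ := measure_le_abs_sub_le_add _ _ a
    _ = _ := by rw [hW, two_mul]

lemma devSeries_lt_top_of_devSeries_sub [IsProbabilityMeasure μ] {Y W : ℕ → Ω → ℝ}
    {G : ℝ → ℝ} (hindep : ∀ n, IndepFun (partialSum Y n) (partialSum W n) μ)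
    (hW : ∀ n, Measurable (partialSum W n))
    (hlim : ∀ ε > (0 : ℝ),
      Tendsto (fun n : ℕ => μ {ω | ε ≤ |partialSum W n ω / n|}) atTop (𝓝 0))
    (hsub : ∀ a > (0 : ℝ), devSeries μ (fun n ω => Y n ω - W n ω) G a < ⊤) {a : ℝ}
    (ha : 0 < a) : devSeries μ Y G a < ⊤ := by
  refine devSeries_lt_top_of_eventually_le (C := 2) ofNat_ne_top ?_ (hsub (a / 2) (half_pos ha))
  filter_upwards [(hlim (a / 2) (half_pos ha)).eventually
    (Iic_mem_nhds (by norm_num : (0 : ℝ≥0∞) < 2⁻¹))] with n hn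
  simp only [partialSum_sub_div]
  have hdiv : Measurable fun x : ℝ => x / n := measurable_id.div_const _
  exact ((hindep n).comp hdiv hdiv).measure_le_abs_le_two_mul_measure_le_abs_sub
    ((hW n).div_const _) hn

end

theorem stmt10_general {Ω : Type*} [MeasurableSpace Ω] (μ : Measure Ω) [IsProbabilityMeasure μ]
    (X : Ω → ℝ) (Z : ℕ × Bool → Ω → ℝ)
    (hZ : ∀ p, Measurable (Z p))
    (hindep : iIndepFun Z μ)
    (hident : ∀ p, IdentDistrib (Z p) X μ μ)
    (hint : Integrable X μ) (hcent : μ[X] = 0)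
    (G : ℝ → ℝ) :
    (∀ a > (0 : ℝ), devSeries μ (fun n => Z (n, false)) G a < ⊤) ↔
      (∀ a > (0 : ℝ),
        devSeries μ (fun n ω => Z (n, false) ω - Z (n, true) ω) G a < ⊤) := by
  have hcopy : ∀ b, iIndepFun (fun n => Z (n, b)) μ := fun b =>
    hindep.precomp (Function.Embedding.sectL ℕ b).injective
  have hsame : ∀ b b' i j, IdentDistrib (Z (i, b)) (Z (j, b')) μ μ := fun b b' i j =>
    (hident _).trans (hident _).symm
  constructor
  · exact fun h a ha => devSeries_sub_lt_top_of_identDistrib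
      (identDistrib_partialSum (hcopy true) (hcopy false) fun i => hsame _ _ i i) h ha
  · refine fun h a ha => devSeries_lt_top_of_devSeries_sub
      (hindep.indepFun_partialSum_comp hZ (u := .sectL ℕ false) (v := .sectL ℕ true) (by simp))
      (fun n => Finset.measurable_fun_sum _ fun i _ => hZ _) (fun ε hε => ?_) h ha
    exact tendsto_measure_le_abs_partialSum_div ((hident _).integrable_iff.2 hint)
      (fun i j hij => (hcopy true).indepFun hij) (fun i => hsame _ _ i 0)
      ((hident _).integral_eq.trans hcent) hε

/-- `Z (n, false)` plays the role of `X_n` and `Z (n, true)` the role of `X'_n`, an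
independent copy of the sequence; joint independence of the family `Z` encodes the fact
that `(X'_n)` is an independent copy of the i.i.d. sequence `(X_n)`. -/
theorem stmt10 {Ω : Type*} [MeasurableSpace Ω] (μ : Measure Ω) [IsProbabilityMeasure μ]
    (X : Ω → ℝ) (Z : ℕ × Bool → Ω → ℝ)
    (hX : Measurable X) (hZ : ∀ p, Measurable (Z p))
    (hindep : iIndepFun Z μ)
    (hident : ∀ p, IdentDistrib (Z p) X μ μ)
    (hint : Integrable X μ) (hcent : μ[X] = 0)
    (G : ℝ → ℝ) (hG : Moderate G) :
    (∀ a > (0 : ℝ), devSeries μ (fun n => Z (n, false)) G a < ⊤) ↔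
      (∀ a > (0 : ℝ),
        devSeries μ (fun n ω => Z (n, false) ω - Z (n, true) ω) G a < ⊤) :=
  stmt10_general μ X Z hZ hindep hident hint hcent G
end
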